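/- arXiv:1309.5204 — 4 statements merged into one kernel-verified Lean document; each statement's English description precedes it below -/
import Mathlib

section
/- Let (D, ⊣, ⊢, α_D) be a Hom-dialgebra. Then D with the bracket [x,y] = x ⊣ y - y ⊢ x and the same map α_D is a Hom-Leibniz algebra. -/
open LinearMap

/-- A (multiplicative) Hom-Leibniz algebra structure. -/
def IsHomLeibniz {K L : Type*} [Field K] [AddCommGroup L] [Module K L]
    (br : L →ₗ[K] L →ₗ[K] L) (a : L →ₗ[K] L) : Prop :=
  (∀ x y z, br (a x) (br y z) = br (br x y) (a z) - br (br x z) (a y)) ∧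
  ∀ x y, a (br x y) = br (a x) (a y)

section

variable {R M : Type*} [CommRing R] [AddCommGroup M] [Module R M]
  (dl dr : M →ₗ[R] M →ₗ[R] M) (a : M →ₗ[R] M)

theorem sub_flip_hom_leibniz
    (h1 : ∀ x y z, dl (dl x y) (a z) = dl (a x) (dl y z))
    (h2 : ∀ x y z, dl (dl x y) (a z) = dl (a x) (dr y z))
    (h3 : ∀ x y z, dl (dr x y) (a z) = dr (a x) (dl y z))
    (h4 : ∀ x y z, dr (dl x y) (a z) = dr (a x) (dr y z))
    (h5 : ∀ x y z, dr (dr x y) (a z) = dr (a x) (dr y z)) (x y z : M) :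
    (dl - dr.flip) (a x) ((dl - dr.flip) y z) =
      (dl - dr.flip) ((dl - dr.flip) x y) (a z) -
        (dl - dr.flip) ((dl - dr.flip) x z) (a y) := by
  simp only [LinearMap.sub_apply, flip_apply, map_sub]
  -- The four terms on the left become four of the eight on the right; `h3` turns the
  -- remaining four into two cancelling pairs.
  rw [← h1 x y z, ← h2 x z y, h4 y z x, h5 z y x, h3 y x z, h3 z x y]
  abel

theorem map_sub_flip_apply (hal : ∀ x y, a (dl x y) = dl (a x) (a y))
    (har : ∀ x y, a (dr x y) = dr (a x) (a y)) (x y : M) :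
    a ((dl - dr.flip) x y) = (dl - dr.flip) (a x) (a y) := by
  simp only [LinearMap.sub_apply, flip_apply, map_sub, hal, har]

end

/-- a Hom-dialgebra `(D, ⊣, ⊢, α)` gives a Hom-Leibniz algebra with the
bracket `[x,y] = x ⊣ y - y ⊢ x` and the same structure map `α`.  Here `dl x y = x ⊣ y`
and `dr x y = x ⊢ y`. -/
theorem statement2 {K D : Type*} [Field K] [AddCommGroup D] [Module K D]
    (dl dr : D →ₗ[K] D →ₗ[K] D) (a : D →ₗ[K] D)
    (h1 : ∀ x y z, dl (dl x y) (a z) = dl (a x) (dl y z))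
    (h2 : ∀ x y z, dl (dl x y) (a z) = dl (a x) (dr y z))
    (h3 : ∀ x y z, dl (dr x y) (a z) = dr (a x) (dl y z))
    (h4 : ∀ x y z, dr (dl x y) (a z) = dr (a x) (dr y z))
    (h5 : ∀ x y z, dr (dr x y) (a z) = dr (a x) (dr y z))
    (hal : ∀ x y, a (dl x y) = dl (a x) (a y))
    (har : ∀ x y, a (dr x y) = dr (a x) (a y)) :
    IsHomLeibniz (dl - dr.flip) a :=
  ⟨sub_flip_hom_leibniz dl dr a h1 h2 h3 h4 h5, map_sub_flip_apply dl dr a hal har⟩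
end

section
/- Let (M,α_M) and (L,α_L) be multiplicative Hom-Leibniz algebras with a Hom-action of L on M. Then the semi-direct product M ⋊ L, with underlying space M ⊕ L, map α̃(m,l) = (α_M(m), α_L(l)), and bracket [(m₁,l₁),(m₂,l₂)] = ([m₁,m₂] + α_L(l₁)·m₂ + m₁·α_L(l₂), [l₁,l₂]), is a multiplicative Hom-Leibniz algebra. -/
open LinearMap

/-- A homomorphism of Hom-Leibniz algebras. -/
def IsHomLeibnizHom {K L₁ L₂ : Type*} [Field K] [AddCommGroup L₁] [Module K L₁]
    [AddCommGroup L₂] [Module K L₂]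
    (br₁ : L₁ →ₗ[K] L₁ →ₗ[K] L₁) (a₁ : L₁ →ₗ[K] L₁)
    (br₂ : L₂ →ₗ[K] L₂ →ₗ[K] L₂) (a₂ : L₂ →ₗ[K] L₂) (f : L₁ →ₗ[K] L₂) : Prop :=
  (∀ x y, f (br₁ x y) = br₂ (f x) (f y)) ∧ f ∘ₗ a₁ = a₂ ∘ₗ f

/-- A (right) Hom-action of `(L, brL, aL)` on `(M, brM, aM)`, with left action
`lam : L → M → M` and right action `rho : M → L → M`. -/
structure IsHomAction {K L M : Type*} [Field K] [AddCommGroup L] [Module K L]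
    [AddCommGroup M] [Module K M]
    (brL : L →ₗ[K] L →ₗ[K] L) (aL : L →ₗ[K] L)
    (brM : M →ₗ[K] M →ₗ[K] M) (aM : M →ₗ[K] M)
    (lam : L →ₗ[K] M →ₗ[K] M) (rho : M →ₗ[K] L →ₗ[K] M) : Prop where
  act_a : ∀ m x y, rho (aM m) (brL x y) = rho (rho m x) (aL y) - rho (rho m y) (aL x)
  act_b : ∀ x m y, lam (aL x) (rho m y) = rho (lam x m) (aL y) - lam (brL x y) (aM m)
  act_c : ∀ x y m, lam (aL x) (lam y m) = lam (brL x y) (aM m) - rho (lam x m) (aL y)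
  act_d : ∀ x m m', lam (aL x) (brM m m') = brM (lam x m) (aM m') - brM (lam x m') (aM m)
  act_e : ∀ m m' x, brM (aM m) (rho m' x) = rho (brM m m') (aL x) - brM (rho m x) (aM m')
  act_f : ∀ m x m', brM (aM m) (lam x m') = brM (rho m x) (aM m') - rho (brM m m') (aL x)
  act_g : ∀ x m, aM (lam x m) = lam (aL x) (aM m)
  act_h : ∀ m x, aM (rho m x) = rho (aM m) (aL x)

/-- The semi-direct product bracket on `M × L`:
`[(m₁,l₁),(m₂,l₂)] = ([m₁,m₂] + α_L(l₁)·m₂ + m₁·α_L(l₂), [l₁,l₂])`. -/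
def sdBracket {K L M : Type*} [Field K] [AddCommGroup L] [Module K L]
    [AddCommGroup M] [Module K M]
    (brM : M →ₗ[K] M →ₗ[K] M) (brL : L →ₗ[K] L →ₗ[K] L) (aL : L →ₗ[K] L)
    (lam : L →ₗ[K] M →ₗ[K] M) (rho : M →ₗ[K] L →ₗ[K] M) :
    (M × L) →ₗ[K] (M × L) →ₗ[K] (M × L) :=
  LinearMap.mk₂ K
    (fun p q => (brM p.1 q.1 + lam (aL p.2) q.1 + rho p.1 (aL q.2), brL p.2 q.2))
    (by intro p p' q; simp [Prod.ext_iff]; abel)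
    (by intro c p q; simp [Prod.ext_iff, smul_add])
    (by intro p q q'; simp [Prod.ext_iff]; abel)
    (by intro c p q; simp [Prod.ext_iff, smul_add])

section SemidirectProduct

variable {K L M : Type*} [Field K] [AddCommGroup L] [Module K L] [AddCommGroup M] [Module K M]
  {brL : L →ₗ[K] L →ₗ[K] L} {aL : L →ₗ[K] L} {brM : M →ₗ[K] M →ₗ[K] M} {aM : M →ₗ[K] M}
  {lam : L →ₗ[K] M →ₗ[K] M} {rho : M →ₗ[K] L →ₗ[K] M}

theorem sdBracket_apply (p q : M × L) :
    sdBracket brM brL aL lam rho p q =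
      (brM p.1 q.1 + lam (aL p.2) q.1 + rho p.1 (aL q.2), brL p.2 q.2) :=
  rfl

theorem prodMap_sdBracket (hαM : ∀ m m', aM (brM m m') = brM (aM m) (aM m'))
    (hαL : ∀ x y, aL (brL x y) = brL (aL x) (aL y))
    (hlam : ∀ x m, aM (lam x m) = lam (aL x) (aM m))
    (hrho : ∀ m x, aM (rho m x) = rho (aM m) (aL x)) (p q : M × L) :
    aM.prodMap aL (sdBracket brM brL aL lam rho p q) =
      sdBracket brM brL aL lam rho (aM.prodMap aL p) (aM.prodMap aL q) := by
  simp [sdBracket_apply, hαM, hαL, hlam, hrho]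

theorem sdBracket_leibniz
    (hM : ∀ m₁ m₂ m₃, brM (aM m₁) (brM m₂ m₃) = brM (brM m₁ m₂) (aM m₃) - brM (brM m₁ m₃) (aM m₂))
    (hL : IsHomLeibniz brL aL) (hact : IsHomAction brL aL brM aM lam rho) (p q r : M × L) :
    sdBracket brM brL aL lam rho (aM.prodMap aL p) (sdBracket brM brL aL lam rho q r) =
      sdBracket brM brL aL lam rho (sdBracket brM brL aL lam rho p q) (aM.prodMap aL r) -
        sdBracket brM brL aL lam rho (sdBracket brM brL aL lam rho p r) (aM.prodMap aL q) := by
  obtain ⟨m₁, x⟩ := p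
  obtain ⟨m₂, y⟩ := q
  obtain ⟨m₃, z⟩ := r
  refine Prod.ext ?_ (hL.1 x y z)
  simp only [sdBracket_apply, prodMap_apply, Prod.fst_sub, map_add, LinearMap.add_apply, hL.2]
  -- Expanding trilinearly, the terms with arguments from `M, M, M`, `M, L, M`, `M, M, L`,
  -- `L, M, M`, `L, L, M`, `L, M, L`, `M, L, L` cancel by the Leibniz identity of `M` and by the
  -- action axioms (f), (e), (d), (c), (b), (a) respectively.
  linear_combination (norm := abel) hM m₁ m₂ m₃ + hact.act_f m₁ (aL y) m₃ +
    hact.act_e m₁ m₂ (aL z) + hact.act_d (aL x) m₂ m₃ + hact.act_c (aL x) (aL y) m₃ +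
    hact.act_b (aL x) m₂ (aL z) + hact.act_a m₁ (aL y) (aL z)

end SemidirectProduct

/-- the semi-direct product of multiplicative Hom-Leibniz algebras along a
Hom-action is a multiplicative Hom-Leibniz algebra, with structure map `α_M × α_L`. -/
theorem statement5 {K L M : Type*} [Field K] [AddCommGroup L] [Module K L]
    [AddCommGroup M] [Module K M]
    (brL : L →ₗ[K] L →ₗ[K] L) (aL : L →ₗ[K] L)
    (brM : M →ₗ[K] M →ₗ[K] M) (aM : M →ₗ[K] M)
    (lam : L →ₗ[K] M →ₗ[K] M) (rho : M →ₗ[K] L →ₗ[K] M)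
    (hM : IsHomLeibniz brM aM) (hL : IsHomLeibniz brL aL)
    (hact : IsHomAction brL aL brM aM lam rho) :
    IsHomLeibniz (sdBracket brM brL aL lam rho) (aM.prodMap aL) :=
  ⟨sdBracket_leibniz hM.1 hL hact, prodMap_sdBracket hM.2 hL.2 hact.act_g hact.act_h⟩
end

section
/- Let π : (K,α_K) → (L,α_L) be a surjective central extension of multiplicative Hom-Leibniz algebras with (L,α_L) perfect. Then π(Z(K)) ⊆ Z(L) and α_L(Z(L)) ⊆ π(Z(K)). -/
/-!
Lift `z ∈ Z(L)` to some `e ∈ E`. Every bracket of `e` lies in `Ker(π)`, hence is central, so the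
Hom-Leibniz identity kills every bracket of `α_E e` with an element of `[E,E]`. Perfectness of `L`
gives `E = [E,E] + Ker(π)`, and `Ker(π)` is central, so `α_E e ∈ Z(E)` and `π (α_E e) = α_L z`.
-/

open LinearMap Submodule

def homCenter {K L : Type*} [Field K] [AddCommGroup L] [Module K L]
    (br : L →ₗ[K] L →ₗ[K] L) : Set L :=
  {x | ∀ y, br x y = 0 ∧ br y x = 0}

section HomLeibniz

variable {K L : Type*} [Field K] [AddCommGroup L] [Module K L] {br : L →ₗ[K] L →ₗ[K] L}

def bracketSpan (br : L →ₗ[K] L →ₗ[K] L) : Submodule K L :=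
  span K {z | ∃ x y, z = br x y}

def commutant (br : L →ₗ[K] L →ₗ[K] L) (a : L) : Submodule K L :=
  ker (br a) ⊓ ker (br.flip a)

theorem mem_commutant {a y : L} : y ∈ commutant br a ↔ br a y = 0 ∧ br y a = 0 :=
  Iff.rfl

theorem mem_homCenter_iff_commutant_eq_top {a : L} : a ∈ homCenter br ↔ commutant br a = ⊤ := by
  rw [eq_top_iff]
  exact ⟨fun h y _ => h y, fun h y => h trivial⟩

theorem bracketSpan_le_commutant_apply {α : L →ₗ[K] L} (hbr : IsHomLeibniz br α)
    {I : Submodule K L} (hI : ∀ k ∈ I, ∀ y, br k y = 0 ∧ br y k = 0)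
    {e : L} (he : ∀ u, br e u ∈ I ∧ br u e ∈ I) :
    bracketSpan br ≤ commutant br (α e) := by
  refine span_le.mpr ?_
  rintro _ ⟨x, y, rfl⟩
  have hJac := hbr.1
  refine mem_commutant.mpr ⟨?_, ?_⟩
  · rw [hJac, (hI _ (he x).1 (α y)).1, (hI _ (he y).1 (α x)).1, sub_zero]
  · have h := hJac x y e
    rw [(hI _ (he y).2 (α x)).2, (hI _ (he x).2 (α y)).1, sub_zero] at h
    exact h.symm

theorem apply_mem_homCenter_of_brackets_mem {α : L →ₗ[K] L} (hbr : IsHomLeibniz br α)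
    {I : Submodule K L} (hI : ∀ k ∈ I, ∀ y, br k y = 0 ∧ br y k = 0)
    (hspan : bracketSpan br ⊔ I = ⊤) {e : L} (he : ∀ u, br e u ∈ I ∧ br u e ∈ I) :
    α e ∈ homCenter br := by
  rw [mem_homCenter_iff_commutant_eq_top, eq_top_iff, ← hspan]
  refine sup_le (bracketSpan_le_commutant_apply hbr hI he) fun k hk => ?_
  exact mem_commutant.mpr ⟨(hI k hk (α e)).2, (hI k hk (α e)).1⟩

end HomLeibniz

section Extension

variable {K E L : Type*} [Field K] [AddCommGroup E] [Module K E] [AddCommGroup L] [Module K L]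
  {brE : E →ₗ[K] E →ₗ[K] E} {brL : L →ₗ[K] L →ₗ[K] L} {π : E →ₗ[K] L}

theorem image_homCenter_subset (hπbr : ∀ x y, π (brE x y) = brL (π x) (π y))
    (hsurj : Function.Surjective π) : π '' homCenter brE ⊆ homCenter brL := by
  rintro _ ⟨x, hx, rfl⟩ w
  obtain ⟨y, rfl⟩ := hsurj w
  rw [← hπbr, ← hπbr, (hx y).1, (hx y).2, map_zero, and_self]

theorem brackets_mem_ker_of_map_mem_homCenter (hπbr : ∀ x y, π (brE x y) = brL (π x) (π y))
    {e : E} (he : π e ∈ homCenter brL) (u : E) : brE e u ∈ ker π ∧ brE u e ∈ ker π := by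
  simp only [mem_ker, hπbr]
  exact he (π u)

theorem map_bracketSpan (hπbr : ∀ x y, π (brE x y) = brL (π x) (π y))
    (hsurj : Function.Surjective π) : (bracketSpan brE).map π = bracketSpan brL := by
  rw [bracketSpan, Submodule.map_span]
  congr 1
  ext u
  constructor
  · rintro ⟨_, ⟨x, y, rfl⟩, rfl⟩
    exact ⟨π x, π y, hπbr x y⟩
  · rintro ⟨x, y, rfl⟩
    obtain ⟨x, rfl⟩ := hsurj x
    obtain ⟨y, rfl⟩ := hsurj y
    exact ⟨brE x y, ⟨x, y, rfl⟩, hπbr x y⟩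

theorem bracketSpan_sup_ker_eq_top (hπbr : ∀ x y, π (brE x y) = brL (π x) (π y))
    (hsurj : Function.Surjective π) (hperf : bracketSpan brL = ⊤) :
    bracketSpan brE ⊔ ker π = ⊤ := by
  rw [← comap_map_eq, map_bracketSpan hπbr hsurj, hperf, comap_top]

end Extension

theorem statement13_general {K E L : Type*} [Field K] [AddCommGroup E] [Module K E]
    [AddCommGroup L] [Module K L]
    (brE : E →ₗ[K] E →ₗ[K] E) (aE : E →ₗ[K] E)
    (brL : L →ₗ[K] L →ₗ[K] L) (aL : L →ₗ[K] L)
    (hE : IsHomLeibniz brE aE)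
    (π : E →ₗ[K] L)
    (hπbr : ∀ x y, π (brE x y) = brL (π x) (π y)) (hπa : π ∘ₗ aE = aL ∘ₗ π)
    (hsurj : Function.Surjective π)
    (hcentral : ∀ k ∈ LinearMap.ker π, ∀ y, brE k y = 0 ∧ brE y k = 0)
    (hperf : span K {z | ∃ x y, z = brL x y} = ⊤) :
    π '' homCenter brE ⊆ homCenter brL ∧ aL '' homCenter brL ⊆ π '' homCenter brE := by
  refine ⟨image_homCenter_subset hπbr hsurj, ?_⟩
  rintro _ ⟨z, hz, rfl⟩
  obtain ⟨e, rfl⟩ := hsurj z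
  have hspan := bracketSpan_sup_ker_eq_top hπbr hsurj hperf
  refine ⟨aE e, ?_, LinearMap.congr_fun hπa e⟩
  exact apply_mem_homCenter_of_brackets_mem hE hcentral hspan
    (brackets_mem_ker_of_map_mem_homCenter hπbr hz)

/-- if `π : (E,α_E) → (L,α_L)` is a surjective central extension of
multiplicative Hom-Leibniz algebras with `(L,α_L)` perfect, then `π(Z(E)) ⊆ Z(L)` and
`α_L(Z(L)) ⊆ π(Z(E))`. -/
theorem statement13 {K E L : Type*} [Field K] [AddCommGroup E] [Module K E]
    [AddCommGroup L] [Module K L]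
    (brE : E →ₗ[K] E →ₗ[K] E) (aE : E →ₗ[K] E)
    (brL : L →ₗ[K] L →ₗ[K] L) (aL : L →ₗ[K] L)
    (hE : IsHomLeibniz brE aE) (hL : IsHomLeibniz brL aL)
    (π : E →ₗ[K] L)
    (hπbr : ∀ x y, π (brE x y) = brL (π x) (π y)) (hπa : π ∘ₗ aE = aL ∘ₗ π)
    (hsurj : Function.Surjective π)
    (hcentral : ∀ k ∈ LinearMap.ker π, ∀ y, brE k y = 0 ∧ brE y k = 0)
    (hperf : span K {z | ∃ x y, z = brL x y} = ⊤) :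
    π '' homCenter brE ⊆ homCenter brL ∧ aL '' homCenter brL ⊆ π '' homCenter brE :=
  statement13_general brE aE brL aL hE π hπbr hπa hsurj hcentral hperf
end

section
/- Let f : (L',α_{L'}) → (L,α_L) be a homomorphism of perfect multiplicative Hom-Leibniz algebras. Then f⊗f maps the subspace I_{L'} of L'⊗L' spanned by elements -[x₁,x₂]⊗α(x₃) + [x₁,x₃]⊗α(x₂) + α(x₁)⊗[x₂,x₃] into the corresponding subspace I_L of L⊗L, and hence induces a well-defined Hom-Leibniz algebra homomorphism uce(f) : (uce(L'),α̃') → (uce(L),α̃) with {x₁,x₂} ↦ {f(x₁),f(x₂)} satisfying u_L ∘ uce(f) = f ∘ u_{L'}. -/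
open LinearMap Submodule TensorProduct

/-- The subspace `I_L ⊆ L ⊗ L` spanned by the elements
`-[x₁,x₂]⊗α(x₃) + [x₁,x₃]⊗α(x₂) + α(x₁)⊗[x₂,x₃]`; `uce(L) = (L⊗L)/I_L`. -/
def Isub {K L : Type*} [Field K] [AddCommGroup L] [Module K L]
    (br : L →ₗ[K] L →ₗ[K] L) (a : L →ₗ[K] L) : Submodule K (L ⊗[K] L) :=
  span K {t | ∃ x₁ x₂ x₃, t = -(br x₁ x₂ ⊗ₜ[K] a x₃) + br x₁ x₃ ⊗ₜ[K] a x₂ +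
    a x₁ ⊗ₜ[K] br x₂ x₃}

theorem Submodule.existsUnique_comp_mkQ_eq_mkQ_comp {R M N : Type*} [Ring R]
    [AddCommGroup M] [Module R M] [AddCommGroup N] [Module R N]
    {p : Submodule R M} {q : Submodule R N} {φ : M →ₗ[R] N} (h : p.map φ ≤ q) :
    ∃! g : (M ⧸ p) →ₗ[R] N ⧸ q, g ∘ₗ p.mkQ = q.mkQ ∘ₗ φ :=
  ⟨p.mapQ q φ (map_le_iff_le_comap.mp h), mapQ_mkQ _ _ _,
    fun _ hg => linearMap_qext _ (hg.trans (mapQ_mkQ _ _ _).symm)⟩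

theorem TensorProduct.lift_comp_map_eq_comp_lift {R M N : Type*} [CommSemiring R]
    [AddCommMonoid M] [Module R M] [AddCommMonoid N] [Module R N]
    {br' : M →ₗ[R] M →ₗ[R] M} {br : N →ₗ[R] N →ₗ[R] N} {f : M →ₗ[R] N}
    (hfbr : ∀ x y, f (br' x y) = br (f x) (f y)) :
    lift br ∘ₗ map f f = f ∘ₗ lift br' :=
  TensorProduct.ext' fun x y => by simp only [comp_apply, map_tmul, lift.tmul, hfbr]

theorem map_Isub_le {K L' L : Type*} [Field K] [AddCommGroup L'] [Module K L']
    [AddCommGroup L] [Module K L] {br' : L' →ₗ[K] L' →ₗ[K] L'} {a' : L' →ₗ[K] L'}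
    {br : L →ₗ[K] L →ₗ[K] L} {a : L →ₗ[K] L} {f : L' →ₗ[K] L}
    (hfbr : ∀ x y, f (br' x y) = br (f x) (f y)) (hfa : f ∘ₗ a' = a ∘ₗ f) :
    (Isub br' a').map (TensorProduct.map f f) ≤ Isub br a := by
  have hfa' : ∀ x, f (a' x) = a (f x) := LinearMap.congr_fun hfa
  rw [Isub, Isub, Submodule.map_span, span_le]
  rintro _ ⟨_, ⟨x₁, x₂, x₃, rfl⟩, rfl⟩
  refine subset_span ⟨f x₁, f x₂, f x₃, ?_⟩
  simp only [map_add, map_neg, map_tmul, hfbr, hfa']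

theorem statement14_general {K L' L : Type*} [Field K] [AddCommGroup L'] [Module K L']
    [AddCommGroup L] [Module K L]
    (br' : L' →ₗ[K] L' →ₗ[K] L') (a' : L' →ₗ[K] L')
    (br : L →ₗ[K] L →ₗ[K] L) (a : L →ₗ[K] L)
    (f : L' →ₗ[K] L)
    (hfbr : ∀ x y, f (br' x y) = br (f x) (f y)) (hfa : f ∘ₗ a' = a ∘ₗ f) :
    -- f⊗f maps I_{L'} into I_L:
    (Isub br' a').map (TensorProduct.map f f) ≤ Isub br a ∧
    -- the induced map uce(f) exists and is unique:
    (∃! g : (L' ⊗[K] L') ⧸ Isub br' a' →ₗ[K] (L ⊗[K] L) ⧸ Isub br a,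
      g ∘ₗ (Isub br' a').mkQ = (Isub br a).mkQ ∘ₗ TensorProduct.map f f) ∧
    -- uce(f) is a homomorphism of Hom-Leibniz algebras (on representatives:
    -- it intertwines the brackets and the structure maps of uce(L') and uce(L)):
    (∀ x₁ x₂ y₁ y₂ : L',
      (Isub br a).mkQ (TensorProduct.map f f (br' x₁ x₂ ⊗ₜ[K] br' y₁ y₂)) =
        (Isub br a).mkQ (br (f x₁) (f x₂) ⊗ₜ[K] br (f y₁) (f y₂))) ∧
    (∀ x₁ x₂ : L',
      (Isub br a).mkQ (TensorProduct.map f f (a' x₁ ⊗ₜ[K] a' x₂)) =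
        (Isub br a).mkQ (a (f x₁) ⊗ₜ[K] a (f x₂))) ∧
    -- u_L ∘ uce(f) = f ∘ u_{L'} on representatives:
    TensorProduct.lift br ∘ₗ TensorProduct.map f f = f ∘ₗ TensorProduct.lift br' := by
  have hfa' : ∀ x, f (a' x) = a (f x) := LinearMap.congr_fun hfa
  have hmap := map_Isub_le hfbr hfa
  refine ⟨hmap, existsUnique_comp_mkQ_eq_mkQ_comp hmap, fun x₁ x₂ y₁ y₂ => ?_,
    fun x₁ x₂ => ?_, lift_comp_map_eq_comp_lift hfbr⟩
  · rw [map_tmul, hfbr, hfbr]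
  · rw [map_tmul, hfa', hfa']

/-- a homomorphism `f : (L',α') → (L,α)` of perfect multiplicative
Hom-Leibniz algebras induces `uce(f) : uce(L') → uce(L)`: `f⊗f` maps `I_{L'}` into
`I_L`, there is a unique linear map `g` on the quotients with `g∘mkQ = mkQ∘(f⊗f)`
(so `g{x₁,x₂} = {f x₁, f x₂}`), `g` is compatible with the brackets and structure maps
of `uce(L')` and `uce(L)`, and `u_L ∘ uce(f) = f ∘ u_{L'}` (expressed on
representatives via `u({x₁,x₂}) = [x₁,x₂]`, i.e. `lift br ∘ (f⊗f) = f ∘ lift br'`). -/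
theorem statement14 {K L' L : Type*} [Field K] [AddCommGroup L'] [Module K L']
    [AddCommGroup L] [Module K L]
    (br' : L' →ₗ[K] L' →ₗ[K] L') (a' : L' →ₗ[K] L')
    (br : L →ₗ[K] L →ₗ[K] L) (a : L →ₗ[K] L)
    (hL' : IsHomLeibniz br' a') (hL : IsHomLeibniz br a)
    (hperf' : span K {z | ∃ x y, z = br' x y} = ⊤)
    (hperf : span K {z | ∃ x y, z = br x y} = ⊤)
    (f : L' →ₗ[K] L)
    (hfbr : ∀ x y, f (br' x y) = br (f x) (f y)) (hfa : f ∘ₗ a' = a ∘ₗ f) :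
    -- f⊗f maps I_{L'} into I_L:
    (Isub br' a').map (TensorProduct.map f f) ≤ Isub br a ∧
    -- the induced map uce(f) exists and is unique:
    (∃! g : (L' ⊗[K] L') ⧸ Isub br' a' →ₗ[K] (L ⊗[K] L) ⧸ Isub br a,
      g ∘ₗ (Isub br' a').mkQ = (Isub br a).mkQ ∘ₗ TensorProduct.map f f) ∧
    -- uce(f) is a homomorphism of Hom-Leibniz algebras (on representatives:
    -- it intertwines the brackets and the structure maps of uce(L') and uce(L)):
    (∀ x₁ x₂ y₁ y₂ : L',
      (Isub br a).mkQ (TensorProduct.map f f (br' x₁ x₂ ⊗ₜ[K] br' y₁ y₂)) =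
        (Isub br a).mkQ (br (f x₁) (f x₂) ⊗ₜ[K] br (f y₁) (f y₂))) ∧
    (∀ x₁ x₂ : L',
      (Isub br a).mkQ (TensorProduct.map f f (a' x₁ ⊗ₜ[K] a' x₂)) =
        (Isub br a).mkQ (a (f x₁) ⊗ₜ[K] a (f x₂))) ∧
    -- u_L ∘ uce(f) = f ∘ u_{L'} on representatives:
    TensorProduct.lift br ∘ₗ TensorProduct.map f f = f ∘ₗ TensorProduct.lift br' :=
  statement14_general br' a' br a f hfbr hfa
end
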